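/- Let X₁,…,Xₙ be independent random elements of a separable metrizable topological group G, and set x^j_k = X_{j+1} ⋯ X_k for j ≤ k ≤ n. Let U be a symmetric measurable neighborhood of the identity and α ∈ [0,1) such that P(x^0_j ∉ U) ≤ α for all j ≤ n. Then (1 − α) · P(∃ j ≤ n : x^j_n ∉ U·U) ≤ P(x^0_n ∉ U). -/

import Mathlib

/-!
Ottaviani's argument. Let `τ` be the last `j ≤ n` at which `x^j_n` leaves `U * U`. The event
`{τ = j}` depends only on `X_{j+1}, …, X_n`, hence is independent of `{x^0_j ∈ U}`, which has
probability at least `1 - α`. On both events `x^0_n = x^0_j x^j_n` must lie outside `U`, for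
otherwise `x^j_n = (x^0_j)⁻¹ x^0_n ∈ U * U`; summing over the disjoint events `{τ = j}` gives the
bound. Since `U * U` need not be Borel, the walk is stopped on leaving a measurable subset
`Bᶜ ⊆ U * U` instead, chosen so that every measurable subset of `U * U ∩ B` is null for the law
of each `x^j_n`.
-/

open MeasureTheory ProbabilityTheory Pointwise
open scoped ENNReal

def partialProd {Ω G : Type*} [Monoid G] (X : ℕ → Ω → G) (j k : ℕ) (ω : Ω) : G :=
  ((List.range' (j + 1) (k - j)).map (fun i => X i ω)).prod

section LastHit

variable {Ω : Type*} (E : ℕ → Set Ω) (n : ℕ)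

/-- The event that `j` is the last index `≤ n` at which `E` occurs; for `j > n` it is just `E j`. -/
def lastHit (j : ℕ) : Set Ω := E j \ ⋃ k ∈ Finset.Ioc j n, E k

theorem pairwiseDisjoint_lastHit : (↑(Finset.Iic n) : Set ℕ).PairwiseDisjoint (lastHit E n) := by
  have key : ∀ j k, k ≤ n → j < k → Disjoint (lastHit E n j) (lastHit E n k) := fun j k hk hjk =>
    Set.disjoint_left.2 fun ω hj hk' =>
      hj.2 (Set.mem_biUnion (Finset.mem_Ioc.2 ⟨hjk, hk⟩) hk'.1)
  intro j hj k hk hne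
  simp only [Finset.coe_Iic, Set.mem_Iic] at hj hk
  rcases hne.lt_or_gt with h | h
  · exact key j k hk h
  · exact (key k j hj h).symm

theorem biUnion_lastHit : ⋃ j ∈ Finset.Iic n, lastHit E n j = ⋃ j ∈ Finset.Iic n, E j := by
  classical
  refine subset_antisymm (Set.biUnion_mono subset_rfl fun j _ => Set.sdiff_subset) ?_
  intro ω hω
  simp only [Set.mem_iUnion, Finset.mem_Iic, exists_prop] at hω
  obtain ⟨j, hjn, hj⟩ := hω
  have hlast := Nat.findGreatest_spec (P := (ω ∈ E ·)) hjn hj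
  refine Set.mem_biUnion (Finset.mem_Iic.2 (Nat.findGreatest_le n)) ⟨hlast, ?_⟩
  simp only [Set.mem_iUnion, Finset.mem_Ioc, exists_prop, not_exists, not_and]
  exact fun k hk => Nat.findGreatest_is_greatest hk.1 hk.2

theorem measurableSet_lastHit {m : MeasurableSpace Ω} {j : ℕ}
    (hE : ∀ k, j ≤ k → MeasurableSet[m] (E k)) : MeasurableSet[m] (lastHit E n j) :=
  (hE j le_rfl).diff <| Finset.measurableSet_biUnion _ fun k hk => hE k (Finset.mem_Ioc.1 hk).1.le

end LastHit

theorem one_sub_le_prob_of_prob_compl_le {Ω : Type*} [MeasurableSpace Ω] {μ : Measure Ω}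
    [IsProbabilityMeasure μ] {s : Set Ω} (hs : MeasurableSet s) {α : ℝ≥0∞} (hα : μ sᶜ ≤ α) :
    1 - α ≤ μ s :=
  tsub_le_iff_right.2 <| calc
    1 = μ s + μ sᶜ := (prob_add_prob_compl hs).symm
    _ ≤ μ s + α := by gcongr

theorem one_sub_mul_measure_biUnion_le_of_lastHit {Ω : Type*} [MeasurableSpace Ω] {μ : Measure Ω}
    [IsProbabilityMeasure μ] {E C : ℕ → Set Ω} {D : Set Ω} {n : ℕ} {α : ℝ≥0∞}
    (hE : ∀ j, MeasurableSet (E j)) (hC : ∀ j, MeasurableSet (C j))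
    (hindep : ∀ j ≤ n, μ (lastHit E n j ∩ C j) = μ (lastHit E n j) * μ (C j))
    (hα : ∀ j ≤ n, μ (C j)ᶜ ≤ α)
    (hD : ∀ j ≤ n, ∀ᵐ ω ∂μ, ω ∈ C j → ω ∈ E j → ω ∈ D) :
    (1 - α) * μ (⋃ j ∈ Finset.Iic n, E j) ≤ μ D := by
  have hA : ∀ j, MeasurableSet (lastHit E n j) :=
    fun j => measurableSet_lastHit E n fun k _ => hE k
  have hdisj := pairwiseDisjoint_lastHit E n
  have hAC : ⋃ j ∈ Finset.Iic n, (lastHit E n j ∩ C j) ≤ᵐ[μ] D := by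
    have hD' : ∀ᵐ ω ∂μ, ∀ j ∈ Finset.Iic n, ω ∈ C j → ω ∈ E j → ω ∈ D :=
      (Filter.eventually_all_finset _).2 fun j hj => hD j (Finset.mem_Iic.1 hj)
    filter_upwards [hD'] with ω hω hmem
    obtain ⟨j, hj, hωA, hωC⟩ := Set.mem_iUnion₂.1 hmem
    exact hω j hj hωC hωA.1
  calc (1 - α) * μ (⋃ j ∈ Finset.Iic n, E j)
      = ∑ j ∈ Finset.Iic n, (1 - α) * μ (lastHit E n j) := by
        rw [← biUnion_lastHit, measure_biUnion_finset hdisj fun j _ => hA j, Finset.mul_sum]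
    _ ≤ ∑ j ∈ Finset.Iic n, μ (lastHit E n j ∩ C j) := by
        refine Finset.sum_le_sum fun j hj => ?_
        have hjn := Finset.mem_Iic.1 hj
        rw [hindep j hjn, mul_comm (μ (lastHit E n j))]
        exact mul_le_mul_left (one_sub_le_prob_of_prob_compl_le (hC j) (hα j hjn)) _
    _ = μ (⋃ j ∈ Finset.Iic n, (lastHit E n j ∩ C j)) :=
        (measure_biUnion_finset (hdisj.mono fun j => Set.inter_subset_left)
          fun j _ => (hA j).inter (hC j)).symm
    _ ≤ μ D := measure_mono_ae hAC

section PartialProd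

variable {Ω G : Type*} [Monoid G] (X : ℕ → Ω → G)

theorem partialProd_mul_partialProd {j m k : ℕ} (hjm : j ≤ m) (hmk : m ≤ k) (ω : Ω) :
    partialProd X j m ω * partialProd X m k ω = partialProd X j k ω := by
  have hlen : k - j = (m - j) + (k - m) := by omega
  have hstart : j + 1 + (m - j) = m + 1 := by omega
  rw [partialProd, partialProd, partialProd, ← List.prod_append, ← List.map_append, hlen,
    ← List.range'_append_1, hstart]

variable [MeasurableSpace G] [MeasurableMul₂ G]

theorem measurable_partialProd {m : MeasurableSpace Ω} {j k : ℕ}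
    (hX : ∀ i, j < i → i ≤ k → Measurable[m] (X i)) : Measurable[m] (partialProd X j k) := by
  have h := List.measurable_fun_prod ((List.range' (j + 1) (k - j)).map X) (by
    simp only [List.mem_map, List.mem_range'_1, forall_exists_index, and_imp]
    rintro _ i hji hik rfl
    exact hX i (by omega) (by omega))
  simp only [List.map_map, Function.comp_def] at h
  exact h

theorem measurable_partialProd_iSup_comap {I : Set ℕ} {j k : ℕ}
    (hI : ∀ i, j < i → i ≤ k → i ∈ I) :
    Measurable[⨆ i ∈ I, MeasurableSpace.comap (X i) ‹_›] (partialProd X j k) :=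
  measurable_partialProd X fun i hji hik =>
    Measurable.of_comap_le (le_iSup₂ (f := fun i (_ : i ∈ I) => MeasurableSpace.comap (X i) ‹_›)
      i (hI i hji hik))

end PartialProd

theorem indep_iSup_comap_Iic_Ioi {Ω β : Type*} [MeasurableSpace Ω] {μ : Measure Ω}
    [MeasurableSpace β] {X : ℕ → Ω → β} (hX : ∀ i, Measurable (X i)) (hindep : iIndepFun X μ)
    (j : ℕ) :
    Indep (⨆ i ∈ Set.Iic j, MeasurableSpace.comap (X i) ‹_›)
      (⨆ i ∈ Set.Ioi j, MeasurableSpace.comap (X i) ‹_›) μ :=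
  indep_iSup_of_disjoint (fun i => (hX i).comap_le) hindep (Set.Iic_disjoint_Ioi le_rfl)

section Independence

variable {Ω G : Type*} [MeasurableSpace Ω] {μ : Measure Ω} [Monoid G] [MeasurableSpace G]
  [MeasurableMul₂ G] {X : ℕ → Ω → G}

theorem indepFun_partialProd (hX : ∀ i, Measurable (X i)) (hindep : iIndepFun X μ) {j k : ℕ}
    (hjk : j ≤ k) (l : ℕ) : IndepFun (partialProd X 0 j) (partialProd X k l) μ :=
  (IndepFun_iff_Indep _ _ μ).2 <| indep_of_indep_of_le_right
    (indep_of_indep_of_le_left (indep_iSup_comap_Iic_Ioi hX hindep j)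
      (measurable_partialProd_iSup_comap X fun _ _ hij => hij).comap_le)
    (measurable_partialProd_iSup_comap X fun _ hki _ => hjk.trans_lt hki).comap_le

theorem measure_lastHit_inter_partialProd_preimage (hX : ∀ i, Measurable (X i))
    (hindep : iIndepFun X μ) {B U : Set G} (hB : MeasurableSet B) (hU : MeasurableSet U)
    (n j : ℕ) :
    μ (lastHit (fun k => partialProd X k n ⁻¹' B) n j ∩ partialProd X 0 j ⁻¹' U) =
      μ (lastHit (fun k => partialProd X k n ⁻¹' B) n j) * μ (partialProd X 0 j ⁻¹' U) :=
  (Indep_iff _ _ μ).1 (indep_iSup_comap_Iic_Ioi hX hindep j).symm _ _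
    (measurableSet_lastHit _ n fun _ hjk =>
      measurable_partialProd_iSup_comap X (fun _ hki _ => hjk.trans_lt hki) hB)
    (measurable_partialProd_iSup_comap X (fun _ _ hij => hij) hU)

end Independence

theorem ae_mul_notMem_of_indepFun {Ω G : Type*} [MeasurableSpace Ω] {μ : Measure Ω}
    [IsFiniteMeasure μ] [Group G] [MeasurableSpace G] [MeasurableMul₂ G] {Y Z : Ω → G}
    (hY : Measurable Y) (hZ : Measurable Z) (hYZ : IndepFun Y Z μ) {U B : Set G}
    (hU : MeasurableSet U) (hUsymm : ∀ g ∈ U, g⁻¹ ∈ U) (hB : MeasurableSet B)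
    (hBnull : ∀ K, MeasurableSet K → K ⊆ U * U → μ.map Z (B ∩ K) = 0) :
    ∀ᵐ ω ∂μ, Y ω ∈ U → Z ω ∈ B → Y ω * Z ω ∉ U := by
  set S : Set (G × G) := {p | p.1 ∈ U ∧ p.2 ∈ B ∧ p.1 * p.2 ∈ U}
  have hS : MeasurableSet S :=
    (measurable_fst hU).inter ((measurable_snd hB).inter ((measurable_fst.mul measurable_snd) hU))
  have hsection : ∀ a, μ.map Z (Prod.mk a ⁻¹' S) = 0 := by
    intro a
    by_cases ha : a ∈ U
    · refine measure_mono_null ?_ (hBnull _ (measurable_const_mul a hU) fun b hb => ?_)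
      · exact fun b hb => ⟨hb.2.1, hb.2.2⟩
      · simpa using Set.mul_mem_mul (hUsymm a ha) (show a * b ∈ U from hb)
    · exact measure_mono_null (fun b hb => ha hb.1) measure_empty
  have hnull : μ.map (fun ω => (Y ω, Z ω)) S = 0 := by
    rw [(indepFun_iff_map_prod_eq_prod_map_map hY.aemeasurable hZ.aemeasurable).1 hYZ]
    exact Measure.measure_prod_null_of_ae_null hS (ae_of_all _ hsection)
  rw [Measure.map_apply (hY.prodMk hZ) hS] at hnull
  rw [ae_iff]
  refine measure_mono_null (fun ω hω => ?_) hnull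
  by_contra h
  exact hω fun hYU hZB hYZU => h ⟨hYU, hZB, hYZU⟩

theorem exists_measurableSet_compl_subset_inter_null {α ι : Type*} [MeasurableSpace α]
    [Countable ι] (ν : ι → Measure α) [∀ i, SFinite (ν i)] (T : Set α) :
    ∃ B, MeasurableSet B ∧ Tᶜ ⊆ B ∧
      ∀ i K, MeasurableSet K → K ⊆ T → ν i (B ∩ K) = 0 := by
  refine ⟨toMeasurable (Measure.sum ν) Tᶜ, measurableSet_toMeasurable _ _,
    subset_toMeasurable _ _, fun i K hK hKT => ?_⟩
  have h : Measure.sum ν (toMeasurable (Measure.sum ν) Tᶜ ∩ K) = 0 := by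
    rw [Measure.measure_toMeasurable_inter_of_sFinite hK,
      ((disjoint_compl_left (a := T)).mono_right hKT).inter_eq, measure_empty]
  exact nonpos_iff_eq_zero.1 (h ▸ Measure.le_sum ν i _)

theorem maximum_oscillation_bound_general {Ω G : Type*} [MeasurableSpace Ω]
    {μ : Measure Ω} [IsProbabilityMeasure μ]
    [Group G] [TopologicalSpace G] [IsTopologicalGroup G]
    [TopologicalSpace.SeparableSpace G] [TopologicalSpace.MetrizableSpace G]
    [MeasurableSpace G] [BorelSpace G]
    (n : ℕ) (X : ℕ → Ω → G) (hmeas : ∀ i, Measurable (X i))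
    (hindep : iIndepFun X μ)
    (U : Set G) (hU : MeasurableSet U)
    (hUsymm : ∀ g ∈ U, g⁻¹ ∈ U)
    (α : ℝ≥0∞)
    (hbound : ∀ j ≤ n, μ {ω | partialProd X 0 j ω ∉ U} ≤ α) :
    (1 - α) * μ {ω | ∃ j ≤ n, partialProd X j n ω ∉ U * U}
      ≤ μ {ω | partialProd X 0 n ω ∉ U} := by
  have : SecondCountableTopology G :=
    letI := TopologicalSpace.metrizableSpaceMetric G
    UniformSpace.secondCountable_of_separable G
  have hx : ∀ j k, Measurable (partialProd X j k) :=
    fun j k => measurable_partialProd X fun i _ _ => hmeas i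
  obtain ⟨B, hB, hUUB, hBnull⟩ :=
    exists_measurableSet_compl_subset_inter_null (fun j => μ.map (partialProd X j n)) (U * U)
  have hcover : {ω | ∃ j ≤ n, partialProd X j n ω ∉ U * U} ⊆
      ⋃ j ∈ Finset.Iic n, partialProd X j n ⁻¹' B := fun ω ⟨j, hj, hjU⟩ =>
    Set.mem_biUnion (Finset.mem_Iic.2 hj) (hUUB hjU)
  refine (mul_le_mul_right (measure_mono hcover) _).trans
    (one_sub_mul_measure_biUnion_le_of_lastHit (fun j => hx j n hB) (fun j => hx 0 j hU)
      (fun j _ => measure_lastHit_inter_partialProd_preimage hmeas hindep hB hU n j) hbound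
      fun j hj => ?_)
  filter_upwards [ae_mul_notMem_of_indepFun (hx 0 j) (hx j n)
    (indepFun_partialProd hmeas hindep le_rfl n) hU hUsymm hB (hBnull j)] with ω hω hC hE
  rw [← partialProd_mul_partialProd X (Nat.zero_le j) hj]
  exact hω hC hE

theorem maximum_oscillation_bound {Ω G : Type*} [MeasurableSpace Ω]
    {μ : Measure Ω} [IsProbabilityMeasure μ]
    [Group G] [TopologicalSpace G] [IsTopologicalGroup G]
    [TopologicalSpace.SeparableSpace G] [TopologicalSpace.MetrizableSpace G]
    [MeasurableSpace G] [BorelSpace G]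
    (n : ℕ) (X : ℕ → Ω → G) (hmeas : ∀ i, Measurable (X i))
    (hindep : iIndepFun X μ)
    (U : Set G) (hU : MeasurableSet U) (hUnhds : U ∈ nhds (1 : G))
    (hUsymm : ∀ g ∈ U, g⁻¹ ∈ U)
    (α : ℝ≥0∞) (hα : α < 1)
    (hbound : ∀ j ≤ n, μ {ω | partialProd X 0 j ω ∉ U} ≤ α) :
    (1 - α) * μ {ω | ∃ j ≤ n, partialProd X j n ω ∉ U * U}
      ≤ μ {ω | partialProd X 0 n ω ∉ U} :=
  maximum_oscillation_bound_general n X hmeas hindep U hU hUsymm α hbound
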